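/- For any two distinct primes p and q, the independent graph I_G(Z_{pq}) is a complete 4-partite graph: it is isomorphic to the complete multipartite graph with four parts of sizes 1, p − 1, q − 1, and (p − 1)(q − 1), these parts being the sets of elements of Z_{pq} of additive order 1, p, q, and pq respectively. -/

import Mathlib

open SimpleGraph

/-- The independent graph of `ZMod n`: two distinct vertices are adjacent iff
their additive orders differ. -/
def indepGraph (n : ℕ) : SimpleGraph (ZMod n) where
  Adj a b := addOrderOf a ≠ addOrderOf b
  symm := ⟨fun _ _ h => Ne.symm h⟩
  loopless := ⟨fun _ h => h rfl⟩

noncomputable instance (n : ℕ) : DecidableRel (indepGraph n).Adj :=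
  fun a b => inferInstanceAs (Decidable (addOrderOf a ≠ addOrderOf b))

/-! Adjacency in `indepGraph n` depends only on the additive order, so the graph is the complete
multipartite graph on the fibres of `addOrderOf`. The order of an element of `ZMod (p * q)` divides
`p * q`, hence is `1`, `p`, `q` or `p * q`, and a cyclic group of order `n` has exactly `φ d`
elements of order `d` for each `d ∣ n`. -/

noncomputable def SimpleGraph.isoCompleteMultipartiteOfFibers {V ι α : Type*}
    (G : SimpleGraph V) (f : V → α) (v : ι → α) (hv : Function.Injective v)
    (hf : ∀ a, f a ∈ Set.range v) (hG : ∀ a b, G.Adj a b ↔ f a ≠ f b) :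
    G ≃g completeMultipartiteGraph fun i => {a // f a = v i} where
  toFun a := ⟨(hf a).choose, a, (hf a).choose_spec.symm⟩
  invFun s := s.2.1
  left_inv _ := rfl
  right_inv := by
    rintro ⟨i, a, ha⟩
    obtain rfl : (hf a).choose = i := hv ((hf a).choose_spec.trans ha)
    rfl
  map_rel_iff' {a b} := by
    simp only [Equiv.coe_fn_mk, comap_adj, top_adj]
    rw [hG, ← hv.ne_iff, (hf a).choose_spec, (hf b).choose_spec]

theorem IsAddCyclic.natCard_addOrderOf_eq_totient {α : Type*} [AddGroup α] [Fintype α]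
    [IsAddCyclic α] {d : ℕ} (hd : d ∣ Fintype.card α) :
    Nat.card {a : α // addOrderOf a = d} = d.totient := by
  classical
  rw [Nat.card_eq_fintype_card, Fintype.card_subtype, card_addOrderOf_eq_totient hd]

theorem Nat.eq_one_or_eq_or_eq_or_eq_mul_of_dvd_prime_mul {p q d : ℕ} (hp : p.Prime)
    (hq : q.Prime) (hd : d ∣ p * q) : d = 1 ∨ d = p ∨ d = q ∨ d = p * q := by
  obtain ⟨a, b, ha, hb, rfl⟩ := Nat.dvd_mul.1 hd
  rcases (Nat.dvd_prime hp).1 ha with rfl | rfl <;>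
    rcases (Nat.dvd_prime hq).1 hb with rfl | rfl <;> simp

theorem Nat.injective_vec_one_prime_prime_mul {p q : ℕ} (hp : p.Prime) (hq : q.Prime)
    (hpq : p ≠ q) :
    Function.Injective ![1, p, q, p * q] := by
  have hp2 := hp.two_le
  have hq2 := hq.two_le
  have hp_lt : p < p * q := lt_mul_of_one_lt_right hp.pos hq.one_lt
  have hq_lt : q < p * q := lt_mul_of_one_lt_left hq.pos hp.one_lt
  simp only [Matrix.vecCons, Fin.cons_injective_iff, Set.mem_range, not_exists, Fin.forall_fin_succ,
    Fin.cons_zero, Fin.cons_succ, IsEmpty.forall_iff, Function.injective_of_subsingleton, and_true]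
  omega

/-- For distinct primes p, q, the independent graph of ZMod (p*q) is a complete
4-partite graph with parts of sizes 1, p-1, q-1 and (p-1)*(q-1). -/
theorem stmt_18 (p q : ℕ) (hp : p.Prime) (hq : q.Prime) (hpq : p ≠ q) :
    Nonempty (indepGraph (p * q) ≃g completeMultipartiteGraph
      (fun i : Fin 4 => {a : ZMod (p * q) // addOrderOf a = ![1, p, q, p * q] i})) ∧
    Nat.card {a : ZMod (p * q) // addOrderOf a = 1} = 1 ∧
    Nat.card {a : ZMod (p * q) // addOrderOf a = p} = p - 1 ∧
    Nat.card {a : ZMod (p * q) // addOrderOf a = q} = q - 1 ∧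
    Nat.card {a : ZMod (p * q) // addOrderOf a = p * q} = (p - 1) * (q - 1) := by
  have : NeZero (p * q) := ⟨(Nat.mul_pos hp.pos hq.pos).ne'⟩
  have card_eq {d : ℕ} (hd : d ∣ p * q) :
      Nat.card {a : ZMod (p * q) // addOrderOf a = d} = d.totient :=
    IsAddCyclic.natCard_addOrderOf_eq_totient (by rwa [ZMod.card])
  have order_mem (a : ZMod (p * q)) : addOrderOf a ∈ Set.range ![1, p, q, p * q] := by
    have hdvd : addOrderOf a ∣ p * q := by
      simpa only [ZMod.card] using addOrderOf_dvd_card (x := a)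
    rcases Nat.eq_one_or_eq_or_eq_or_eq_mul_of_dvd_prime_mul hp hq hdvd with h | h | h | h
    exacts [⟨0, h.symm⟩, ⟨1, h.symm⟩, ⟨2, h.symm⟩, ⟨3, h.symm⟩]
  refine ⟨⟨(indepGraph (p * q)).isoCompleteMultipartiteOfFibers addOrderOf _
      (Nat.injective_vec_one_prime_prime_mul hp hq hpq) order_mem fun _ _ => Iff.rfl⟩,
    ?_, ?_, ?_, ?_⟩
  · rw [card_eq (one_dvd _), Nat.totient_one]
  · rw [card_eq (dvd_mul_right p q), Nat.totient_prime hp]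
  · rw [card_eq (dvd_mul_left q p), Nat.totient_prime hq]
  · rw [card_eq dvd_rfl, Nat.totient_mul ((Nat.coprime_primes hp hq).2 hpq),
      Nat.totient_prime hp, Nat.totient_prime hq]
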